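/- Fix a resolution level R ≥ 1. The linear span of the family of Legendre wavelets {ψ_{h,g} : 1 ≤ h ≤ 2^{R−1}, g ∈ ℕ} is dense in L²([0,1]); consequently every f ∈ L²([0,1]) is the L²-limit of finite linear combinations of Legendre wavelets at level R. -/

import Mathlib

open MeasureTheory

/-- The Legendre polynomial of degree `g` on `[−1,1]`, via the Rodrigues formula
`P_g(y) = (1/(2^g g!)) (d/dy)^g [(y² − 1)^g]`. -/
noncomputable def legendreP (g : ℕ) (y : ℝ) : ℝ :=
  (1 / ((2 : ℝ) ^ g * (g.factorial : ℝ))) * iteratedDeriv g (fun z : ℝ => (z ^ 2 - 1) ^ g) y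

/-- The Legendre wavelet `ψ_{h,g}` at resolution level `R`. -/
noncomputable def legendreWavelet (R h g : ℕ) (x : ℝ) : ℝ :=
  if ((h : ℝ) - 1) / 2 ^ (R - 1) ≤ x ∧ x ≤ (h : ℝ) / 2 ^ (R - 1) then
    (2 : ℝ) ^ ((R : ℝ) / 2) * Real.sqrt ((g : ℝ) + 1 / 2) *
      legendreP g (2 ^ R * x - 2 * (h : ℝ) + 1)
  else 0


/-!
On its interval `I_h = [(h-1)/2^{R-1}, h/2^{R-1}]`, the wavelet `ψ_{h,g}` is a polynomial of degree
exactly `g` (Rodrigues' formula composed with an affine map), so for fixed `h` these polynomials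
form a triangular basis of `ℝ[X]` and every polynomial agrees on `I_h` with a finite combination
of the `ψ_{h,g}`. The intervals `I_h` tile `[0,1]` and overlap only at the breakpoints `k/2^{R-1}`,
so every polynomial is almost everywhere on `[0,1]` a finite combination of wavelets. Polynomials
are dense in `Lᵖ([a,b])` for `p < ∞`: approximate by a continuous function, then uniformly by
Weierstrass.
-/

open Polynomial Set
open scoped Nat ENNReal

theorem iteratedDeriv_eval {𝕜 : Type*} [NontriviallyNormedField 𝕜] (q : 𝕜[X]) (n : ℕ) :
    iteratedDeriv n (fun z => q.eval z) = fun z => (derivative^[n] q).eval z := by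
  induction n with
  | zero => simp
  | succ n ih =>
    ext z
    simp [iteratedDeriv_succ, ih, Function.iterate_succ_apply']

theorem sub_one_le_and_le_iff_eq_floor_add_one {α : Type*} [Field α] [LinearOrder α]
    [IsStrictOrderedRing α] [FloorSemiring α] {t : α} (ht₀ : 0 ≤ t) (ht : ∀ k : ℕ, t ≠ k)
    (n : ℕ) : ((n : α) - 1 ≤ t ∧ t ≤ n) ↔ n = ⌊t⌋₊ + 1 := by
  constructor
  · rintro ⟨hlo, hhi⟩
    have hfloor_lt : ⌊t⌋₊ < n := (Nat.floor_lt ht₀).2 (hhi.lt_of_ne (ht n))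
    have hle_floor : n - 1 ≤ ⌊t⌋₊ := Nat.le_floor (by rcases n with _ | n <;> simp_all)
    omega
  · rintro rfl
    push_cast
    exact ⟨by linarith [Nat.floor_le ht₀], (Nat.lt_floor_add_one t).le⟩

theorem MeasureTheory.MemLp.exists_polynomial_eLpNorm_sub_lt {a b : ℝ} {p : ℝ≥0∞}
    (hp : p ≠ ∞) {f : ℝ → ℝ} (hf : MemLp f p (volume.restrict (Icc a b))) {ε : ℝ≥0∞}
    (hε : ε ≠ 0) :
    ∃ q : ℝ[X], eLpNorm (fun x => f x - q.eval x) p (volume.restrict (Icc a b)) < ε := by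
  set μ := volume.restrict (Icc a b)
  obtain ⟨η, hη, hhalf⟩ := exists_Lp_half ℝ μ p hε
  obtain ⟨g, -, hfg, hg, -⟩ := hf.exists_hasCompactSupport_eLpNorm_sub_le hp hη.ne'
  have hμ : μ univ ^ p.toReal⁻¹ ≠ ∞ := by finiteness
  obtain ⟨δ, hδ, hδη⟩ := ENNReal.exists_nnreal_pos_mul_lt hμ hη.ne'
  obtain ⟨q, hq⟩ := exists_polynomial_near_of_continuousOn a b g hg.continuousOn δ hδ
  have hgq : eLpNorm (fun x => g x - q.eval x) p μ ≤ η := by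
    refine (eLpNorm_le_of_ae_nnnorm_bound ?_).trans hδη.le
    filter_upwards [ae_restrict_mem measurableSet_Icc] with x hx
    rw [← NNReal.coe_le_coe, coe_nnnorm, Real.norm_eq_abs, abs_sub_comm]
    exact (hq x hx).le
  have hsplit : (fun x => f x - q.eval x) = (f - g) + fun x => g x - q.eval x := by
    ext x; simp
  refine ⟨q, hsplit ▸ hhalf _ _ (hf.1.sub hg.aestronglyMeasurable)
    (hg.sub q.continuous).aestronglyMeasurable hfg hgq⟩

noncomputable def legendrePoly (g : ℕ) : ℝ[X] :=
  C (1 / ((2 : ℝ) ^ g * g !)) * derivative^[g] ((X ^ 2 - 1) ^ g)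

theorem legendreP_eq_eval (g : ℕ) (y : ℝ) : legendreP g y = (legendrePoly g).eval y := by
  have h : (fun z : ℝ => (z ^ 2 - 1) ^ g) = fun z => ((X ^ 2 - 1) ^ g : ℝ[X]).eval z := by
    simp
  simp [legendreP, legendrePoly, h, iteratedDeriv_eval]

theorem degree_legendrePoly (g : ℕ) : (legendrePoly g).degree = g := by
  have hmonic : ((X ^ 2 - 1) ^ g : ℝ[X]).Monic := (monic_X_pow_sub_C (1 : ℝ) two_ne_zero).pow g
  have hdeg : ((X ^ 2 - 1) ^ g : ℝ[X]).natDegree = g + g := by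
    rw [natDegree_pow, ← C_1, natDegree_X_pow_sub_C]; ring
  have hlead : ((X ^ 2 - 1) ^ g : ℝ[X]).coeff (g + g) = 1 := hdeg ▸ hmonic.coeff_natDegree
  rw [legendrePoly, degree_C_mul (by positivity)]
  refine degree_eq_of_le_of_coeff_ne_zero ?_ ?_
  · refine degree_le_natDegree.trans (Nat.cast_le.2 ?_)
    exact (natDegree_iterate_derivative _ _).trans (by omega)
  · rw [coeff_iterate_derivative, hlead, nsmul_eq_mul, mul_one, Nat.cast_ne_zero]
    exact (Nat.descFactorial_pos.2 (by omega)).ne'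

section Wavelet

variable (R h : ℕ)

def waveletInterval : Set ℝ :=
  Icc (((h : ℝ) - 1) / 2 ^ (R - 1)) ((h : ℝ) / 2 ^ (R - 1))

noncomputable def waveletPoly (g : ℕ) : ℝ[X] :=
  C (2 ^ ((R : ℝ) / 2) * √((g : ℝ) + 1 / 2)) *
    (legendrePoly g).comp (C (2 ^ R) * X - C (2 * (h : ℝ) - 1))

variable {R h}

theorem legendreWavelet_of_mem {g : ℕ} {x : ℝ} (hx : x ∈ waveletInterval R h) :
    legendreWavelet R h g x = (waveletPoly R h g).eval x := by
  rw [legendreWavelet, if_pos (mem_Icc.1 hx)]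
  simp only [legendreP_eq_eval, waveletPoly, eval_mul, eval_C, eval_comp, eval_sub, eval_X]
  ring_nf

theorem legendreWavelet_of_notMem {g : ℕ} {x : ℝ} (hx : x ∉ waveletInterval R h) :
    legendreWavelet R h g x = 0 :=
  if_neg hx

theorem mem_waveletInterval_iff_eq_floor {x : ℝ} (hx₀ : 0 ≤ x)
    (hx : ∀ k : ℕ, x ≠ k / 2 ^ (R - 1)) :
    x ∈ waveletInterval R h ↔ h = ⌊2 ^ (R - 1) * x⌋₊ + 1 := by
  have hpow : (0 : ℝ) < 2 ^ (R - 1) := by positivity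
  have hint : ∀ k : ℕ, 2 ^ (R - 1) * x ≠ k := fun k hk =>
    hx k (by rw [← hk, mul_div_cancel_left₀ _ hpow.ne'])
  rw [← sub_one_le_and_le_iff_eq_floor_add_one (by positivity) hint, waveletInterval, mem_Icc,
    div_le_iff₀' hpow, le_div_iff₀' hpow]

variable (R h)

theorem degree_waveletPoly (g : ℕ) : (waveletPoly R h g).degree = g := by
  have hlin : (C (2 ^ R) * X - C (2 * (h : ℝ) - 1)).degree = 1 := by
    have hCX : (C (2 ^ R) * X : ℝ[X]).degree = 1 := degree_C_mul_X (by positivity)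
    rw [degree_sub_C (by rw [hCX]; exact zero_lt_one), hCX]
  rw [waveletPoly, degree_C_mul (by positivity), degree_comp (by rw [hlin]; exact zero_lt_one),
    hlin, mul_one, degree_legendrePoly]

theorem span_range_waveletPoly : Submodule.span ℝ (range (waveletPoly R h)) = ⊤ :=
  let S : Polynomial.Sequence ℝ := ⟨waveletPoly R h, degree_waveletPoly R h⟩
  S.span fun g => (leadingCoeff_ne_zero.2 (S.ne_zero g)).isUnit

theorem exists_finsupp_sum_legendreWavelet_eq_eval (p : ℝ[X]) :
    ∃ c : ℕ →₀ ℝ, ∀ x ∈ waveletInterval R h,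
      c.sum (fun g a => a * legendreWavelet R h g x) = p.eval x := by
  obtain ⟨c, hc⟩ := Finsupp.mem_span_range_iff_exists_finsupp.1
    (span_range_waveletPoly R h ▸ Submodule.mem_top : p ∈ _)
  refine ⟨c, fun x hx => ?_⟩
  simp only [← hc, Finsupp.sum, eval_finsetSum, eval_smul, smul_eq_mul, legendreWavelet_of_mem hx]

end Wavelet

theorem exists_sum_legendreWavelet_ae_eq_eval (R : ℕ) (p : ℝ[X]) :
    ∃ (s : Finset (ℕ × ℕ)) (c : ℕ × ℕ → ℝ), (∀ q ∈ s, 1 ≤ q.1 ∧ q.1 ≤ 2 ^ (R - 1)) ∧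
      (fun x => ∑ q ∈ s, c q * legendreWavelet R q.1 q.2 x)
        =ᵐ[volume.restrict (Icc (0 : ℝ) 1)] fun x => p.eval x := by
  choose c hc using fun h => exists_finsupp_sum_legendreWavelet_eq_eval R h p
  set H := Finset.Icc 1 (2 ^ (R - 1))
  set G := H.biUnion fun h => (c h).support
  refine ⟨H ×ˢ G, fun q => c q.1 q.2, fun q hq => Finset.mem_Icc.1 (Finset.mem_product.1 hq).1, ?_⟩
  have hbreak := (countable_range fun k : ℕ => (k : ℝ) / 2 ^ (R - 1)).ae_notMem volume
  filter_upwards [ae_restrict_mem measurableSet_Icc, ae_restrict_of_ae hbreak] with x hx hxk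
  have hcell (h : ℕ) := mem_waveletInterval_iff_eq_floor (R := R) (h := h) hx.1
    fun k hk => hxk ⟨k, hk.symm⟩
  have hx1 : x < 1 := hx.2.lt_of_ne fun h1 => hxk ⟨2 ^ (R - 1), by simp [h1]⟩
  have hmem : ⌊2 ^ (R - 1) * x⌋₊ + 1 ∈ H := by
    refine Finset.mem_Icc.2 ⟨by omega, (Nat.floor_lt (mul_nonneg (by positivity) hx.1)).2 ?_⟩
    push_cast
    nlinarith [pow_pos (two_pos (α := ℝ)) (R - 1)]
  rw [Finset.sum_product, Finset.sum_eq_single_of_mem _ hmem]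
  · rw [← hc _ x ((hcell _).2 rfl)]
    exact (Finsupp.sum_of_support_subset _
      (Finset.subset_biUnion_of_mem (fun h => (c h).support) hmem)
      (fun g a => a * legendreWavelet R _ g x) fun _ _ => zero_mul _).symm
  · intro h _ hne
    exact Finset.sum_eq_zero fun g _ => by
      rw [legendreWavelet_of_notMem (mt (hcell h).1 hne), mul_zero]

theorem legendreWavelet_span_dense_general (R : ℕ) (f : ℝ → ℝ)
    (hf : MemLp f 2 (volume.restrict (Set.Icc (0 : ℝ) 1))) :
    ∀ ε : ℝ, 0 < ε →
      ∃ (s : Finset (ℕ × ℕ)) (c : ℕ × ℕ → ℝ),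
        (∀ p ∈ s, 1 ≤ p.1 ∧ p.1 ≤ 2 ^ (R - 1)) ∧
        eLpNorm (fun x => f x - ∑ p ∈ s, c p * legendreWavelet R p.1 p.2 x) 2
            (volume.restrict (Set.Icc (0 : ℝ) 1)) < ENNReal.ofReal ε := by
  intro ε hε
  obtain ⟨q, hq⟩ := hf.exists_polynomial_eLpNorm_sub_lt ENNReal.ofNat_ne_top
    (ENNReal.ofReal_pos.2 hε).ne'
  obtain ⟨s, c, hs, hsum⟩ := exists_sum_legendreWavelet_ae_eq_eval R q
  exact ⟨s, c, hs, (eLpNorm_congr_ae (hsum.mono fun x hx => congrArg (f x - ·) hx)).trans_lt hq⟩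

/-- Density of the span of the Legendre wavelets at level `R` in `L²([0,1])`:
every `f ∈ L²([0,1])` is approximated, to arbitrary accuracy in the `L²` norm,
by finite linear combinations of the wavelets `ψ_{h,g}`, `1 ≤ h ≤ 2^{R−1}`, `g ∈ ℕ`. -/
theorem legendreWavelet_span_dense (R : ℕ) (hR : 1 ≤ R) (f : ℝ → ℝ)
    (hf : MemLp f 2 (volume.restrict (Set.Icc (0 : ℝ) 1))) :
    ∀ ε : ℝ, 0 < ε →
      ∃ (s : Finset (ℕ × ℕ)) (c : ℕ × ℕ → ℝ),
        (∀ p ∈ s, 1 ≤ p.1 ∧ p.1 ≤ 2 ^ (R - 1)) ∧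
        eLpNorm (fun x => f x - ∑ p ∈ s, c p * legendreWavelet R p.1 p.2 x) 2
            (volume.restrict (Set.Icc (0 : ℝ) 1)) < ENNReal.ofReal ε :=
  legendreWavelet_span_dense_general R f hf
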